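/- arXiv:1506.06624 — 2 statements merged into one kernel-verified Lean document; each statement's English description precedes it below -/
import Mathlib

section
/- For a Lévy process X, there exists a continuous function ψ : ℝ^n → ℂ with ψ(0) = 0 such that E[exp(i⟨u, X_t⟩)] = exp(−t·ψ(u)) for all t ≥ 0 and u ∈ ℝ^n. -/
open MeasureTheory ProbabilityTheory Complex Filter Topology
open scoped RealInnerProductSpace

noncomputable section

/-- An `ℝⁿ`-valued Lévy process: `X₀ = 0` a.s., stationary increments that are
independent of the past, and continuity in probability. -/
structure IsLevyProcess {Ω : Type*} [MeasurableSpace Ω] (P : Measure Ω) {n : ℕ}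
    (X : ℝ → Ω → EuclideanSpace ℝ (Fin n)) : Prop where
  isProb : IsProbabilityMeasure P
  meas : ∀ t : ℝ, Measurable (X t)
  init : ∀ᵐ ω ∂P, X 0 ω = 0
  indep : ∀ s t : ℝ, 0 ≤ s → 0 ≤ t →
    IndepFun (fun ω => X (t + s) ω - X t ω)
      (fun ω => (fun r : {r : ℝ // 0 ≤ r ∧ r ≤ t} => X r ω)) P
  stat : ∀ s t : ℝ, 0 ≤ s → 0 ≤ t →
    Measure.map (fun ω => X (t + s) ω - X t ω) P = Measure.map (X s) P
  contProb : ∀ t : ℝ, 0 ≤ t → ∀ ε : ℝ, 0 < ε →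
    Tendsto (fun s : ℝ => P {ω | ε ≤ ‖X s ω - X t ω‖}) (𝓝[Set.Ici 0] t) (𝓝 0)

/-- The characteristic function `φ_t(u) = E[exp(i⟨u, X_t⟩)]`. -/
def charFn {Ω : Type*} [MeasurableSpace Ω] (P : Measure Ω) {n : ℕ}
    (X : ℝ → Ω → EuclideanSpace ℝ (Fin n)) (t : ℝ) (u : EuclideanSpace ℝ (Fin n)) : ℂ :=
  ∫ ω, Complex.exp (Complex.I * (⟪u, X t ω⟫ : ℝ)) ∂P

/-! By independence and stationarity of increments, `t ↦ φ_t(u)` is multiplicative on `[0, ∞)`,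
and continuity in probability makes it right-continuous at `0`, uniformly for `u` in bounded sets.
So for some `δ > 0` it stays in the right half-plane on `[0, δ]`, where the principal logarithm
turns squares into doublings; along the dyadic times `δ / 2 ^ m` this gives
`φ_t(u) = exp (t log φ_δ(u) / δ)`, and right-continuity extends it to all `t ≥ 0`.
The exponent `-log φ_δ(u) / δ` does not depend on `δ`, being the right derivative of `-φ_t(u)` at
`t = 0`, and it is continuous in `u` on every ball, on which one `δ` works uniformly. -/

lemma Complex.log_mul_self_of_re_pos {w : ℂ} (hw : 0 < w.re) :
    log (w * w) = 2 * log w := by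
  have hw0 : w ≠ 0 := fun h => by simp [h] at hw
  obtain ⟨hlo, hhi⟩ := abs_lt.1 (abs_arg_lt_pi_div_two_iff.2 (Or.inl hw))
  rw [(log_mul_eq_add_log_iff hw0 hw0).2 ⟨by linarith, by linarith⟩, two_mul]

lemma Complex.re_pos_of_dist_one_lt {w : ℂ} (hw : dist 1 w < 1) : 0 < w.re := by
  have h := (abs_le.1 (abs_re_le_norm (1 - w))).2
  rw [← dist_eq_norm, sub_re, one_re] at h
  linarith

section Semigroup

variable {f : ℝ → ℂ}

lemma map_natCast_mul_of_map_add (h0 : f 0 = 1)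
    (hmul : ∀ s t, 0 ≤ s → 0 ≤ t → f (s + t) = f s * f t) {a : ℝ} (ha : 0 ≤ a) (k : ℕ) :
    f (k * a) = f a ^ k := by
  induction k with
  | zero => simp [h0]
  | succ k ih =>
    rw [Nat.cast_succ, add_one_mul, hmul _ _ (by positivity) ha, ih, pow_succ]

lemma map_div_two_pow_eq_exp (hmul : ∀ s t, 0 ≤ s → 0 ≤ t → f (s + t) = f s * f t)
    {δ : ℝ} (hδ : 0 < δ) (hre : ∀ s ∈ Set.Icc 0 δ, 0 < (f s).re) (m : ℕ) :
    f (δ / 2 ^ m) = exp (↑(δ / 2 ^ m) * (log (f δ) / δ)) := by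
  have hre_dyadic : ∀ m : ℕ, 0 < (f (δ / 2 ^ m)).re := fun m =>
    hre _ ⟨by positivity, div_le_self hδ.le (one_le_pow₀ one_le_two)⟩
  have hlog : log (f (δ / 2 ^ m)) = log (f δ) / 2 ^ m := by
    induction m with
    | zero => simp
    | succ m ih =>
      have hsq : f (δ / 2 ^ m) = f (δ / 2 ^ (m + 1)) * f (δ / 2 ^ (m + 1)) := by
        rw [← hmul _ _ (by positivity) (by positivity)]
        congr 1
        ring
      rw [hsq, log_mul_self_of_re_pos (hre_dyadic _)] at ih
      rw [pow_succ (2 : ℂ) m, ← div_div, ← ih]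
      ring
  have hne : f (δ / 2 ^ m) ≠ 0 := fun h => by simpa [h] using hre_dyadic m
  rw [← exp_log hne, hlog]
  have hδ' : (δ : ℂ) ≠ 0 := ofReal_ne_zero.2 hδ.ne'
  congr 1
  push_cast
  field_simp

lemma sub_natFloor_div_mul_mem_Ico {t a : ℝ} (ht : 0 ≤ t) (ha : 0 < a) :
    t - ⌊t / a⌋₊ * a ∈ Set.Ico 0 a := by
  have hle := (le_div_iff₀ ha).1 (Nat.floor_le (div_nonneg ht ha.le))
  have hlt := (div_lt_iff₀ ha).1 (Nat.lt_floor_add_one (t / a))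
  constructor <;> nlinarith

lemma eq_exp_mul_of_map_add (h0 : f 0 = 1) (hmul : ∀ s t, 0 ≤ s → 0 ≤ t → f (s + t) = f s * f t)
    (hcont : ContinuousWithinAt f (Set.Ici 0) 0) {δ : ℝ} (hδ : 0 < δ)
    (hre : ∀ s ∈ Set.Icc 0 δ, 0 < (f s).re) {t : ℝ} (ht : 0 ≤ t) :
    f t = exp (t * (log (f δ) / δ)) := by
  set c := log (f δ) / δ
  set a : ℕ → ℝ := fun m => δ / 2 ^ m
  have ha_pos : ∀ m, 0 < a m := fun m => by positivity
  have ha_lim : Tendsto a atTop (𝓝 0) := by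
    simpa using tendsto_const_nhds.div_atTop (tendsto_pow_atTop_atTop_of_one_lt one_lt_two)
  set s : ℕ → ℝ := fun m => ⌊t / a m⌋₊ * a m
  have hr_mem : ∀ m, t - s m ∈ Set.Ico 0 (a m) := fun m =>
    sub_natFloor_div_mul_mem_Ico ht (ha_pos m)
  have hr_lim : Tendsto (fun m => t - s m) atTop (𝓝[≥] 0) :=
    tendsto_nhdsWithin_iff.2 ⟨squeeze_zero (fun m => (hr_mem m).1) (fun m => (hr_mem m).2.le)
      ha_lim, Eventually.of_forall fun m => (hr_mem m).1⟩
  have hs_lim : Tendsto s atTop (𝓝 t) := by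
    simpa using (tendsto_const_nhds (x := t)).sub (hr_lim.mono_right nhdsWithin_le_nhds)
  have hsplit : ∀ m, f t = exp (s m * c) * f (t - s m) := by
    intro m
    have hdyadic : f (s m) = exp (s m * c) := by
      rw [map_natCast_mul_of_map_add h0 hmul (ha_pos m).le, map_div_two_pow_eq_exp hmul hδ hre,
        ← exp_nat_mul]
      simp only [s, a, c]
      push_cast
      ring_nf
    rw [← hdyadic, ← hmul _ _ (by positivity) (hr_mem m).1, add_sub_cancel]
  have hlim : Tendsto (fun m => exp (s m * c) * f (t - s m)) atTop (𝓝 (exp (t * c) * 1)) :=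
    ((continuous_exp.tendsto _).comp (((continuous_ofReal.tendsto t).comp hs_lim).mul_const c)).mul
      (h0 ▸ hcont.tendsto.comp hr_lim)
  rw [mul_one] at hlim
  exact tendsto_nhds_unique (tendsto_const_nhds.congr hsplit) hlim

end Semigroup

lemma derivWithin_Ici_zero_of_eq_exp {f : ℝ → ℂ} {c : ℂ} (h : ∀ t, 0 ≤ t → f t = exp (t * c)) :
    derivWithin f (Set.Ici 0) 0 = c := by
  have hexp : HasDerivAt (fun t : ℝ => exp (t * c)) c 0 := by
    simpa using ((hasDerivAt_id (0 : ℝ)).ofReal_comp.mul_const c).cexp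
  exact (hexp.hasDerivWithinAt.congr (fun t ht => h t ht) (h 0 le_rfl)).derivWithin
    (uniqueDiffWithinAt_Ici 0)

section CharFun

variable {E : Type*} [NormedAddCommGroup E] [InnerProductSpace ℝ E] [MeasurableSpace E]
  [BorelSpace E]

lemma norm_charFun_sub_one_le {μ : Measure E} [IsProbabilityMeasure μ] (u : E) {ε : ℝ}
    (hε : 0 ≤ ε) :
    ‖charFun μ u - 1‖ ≤ ε * ‖u‖ + 2 * μ.real {x | ε ≤ ‖x‖} := by
  set A := {x : E | ε ≤ ‖x‖}
  have hA : MeasurableSet A := measurableSet_le measurable_const measurable_norm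
  have hbound : ∀ x, ‖exp (⟪x, u⟫ * I) - 1‖ ≤ ε * ‖u‖ + A.indicator (fun _ => 2) x := by
    intro x
    by_cases hx : x ∈ A
    · rw [Set.indicator_of_mem hx]
      have : ‖exp (⟪x, u⟫ * I) - 1‖ ≤ 2 :=
        (norm_sub_le _ _).trans (by rw [norm_exp_ofReal_mul_I, norm_one]; norm_num)
      linarith [mul_nonneg hε (norm_nonneg u)]
    · rw [Set.indicator_of_notMem hx, add_zero, mul_comm _ I]
      calc ‖exp (I * ⟪x, u⟫) - 1‖ ≤ ‖⟪x, u⟫‖ := Real.norm_exp_I_mul_ofReal_sub_one_le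
        _ ≤ ‖x‖ * ‖u‖ := norm_inner_le_norm x u
        _ ≤ ε * ‖u‖ := by gcongr; exact (not_le.1 hx).le
  have hint : Integrable (fun x : E => exp (⟪x, u⟫ * I)) μ :=
    (integrable_const (1 : ℝ)).mono (by fun_prop) (by simp [norm_exp_ofReal_mul_I])
  calc ‖charFun μ u - 1‖ = ‖∫ x, (exp (⟪x, u⟫ * I) - 1) ∂μ‖ := by
        rw [integral_sub hint (integrable_const 1), charFun_apply]; simp
    _ ≤ ∫ x, (ε * ‖u‖ + A.indicator (fun _ => 2) x) ∂μ :=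
        norm_integral_le_of_norm_le ((integrable_const _).add ((integrable_const _).indicator hA))
          (Eventually.of_forall hbound)
    _ = ε * ‖u‖ + 2 * μ.real A := by
        rw [integral_add (integrable_const _) ((integrable_const _).indicator hA),
          integral_indicator_const _ hA]
        simp [mul_comm]

lemma tendstoUniformlyOn_charFun_one_of_tendsto_measure {ι : Type*} {l : Filter ι}
    {μ : ι → Measure E} [∀ i, IsProbabilityMeasure (μ i)]
    (h : ∀ ε > 0, Tendsto (fun i => μ i {x | ε ≤ ‖x‖}) l (𝓝 0)) {s : Set E}
    (hs : Bornology.IsBounded s) :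
    TendstoUniformlyOn (fun i => charFun (μ i)) 1 l s := by
  obtain ⟨C, hC, hCs⟩ := hs.exists_pos_norm_le
  rw [Metric.tendstoUniformlyOn_iff]
  intro η hη
  have hε : 0 < η / (2 * C) := by positivity
  have hsmall : Tendsto (fun i => (μ i).real {x | η / (2 * C) ≤ ‖x‖}) l (𝓝 0) :=
    (ENNReal.tendsto_toReal ENNReal.zero_ne_top).comp (h _ hε)
  filter_upwards [hsmall.eventually (gt_mem_nhds (by positivity : (0 : ℝ) < η / 4))]
    with i hi u hu
  rw [Pi.one_apply, dist_comm, dist_eq_norm]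
  calc ‖charFun (μ i) u - 1‖ ≤ η / (2 * C) * ‖u‖ + 2 * (μ i).real {x | η / (2 * C) ≤ ‖x‖} :=
        norm_charFun_sub_one_le u hε.le
    _ < η / (2 * C) * C + 2 * (η / 4) :=
        add_lt_add_of_le_of_lt (by gcongr; exact hCs u hu) (by gcongr)
    _ = η := by field_simp; ring

end CharFun

section CharFn

variable {Ω : Type*} [MeasurableSpace Ω] {P : Measure Ω} {n : ℕ}
  {X : ℝ → Ω → EuclideanSpace ℝ (Fin n)}

lemma charFn_eq_charFun (hX : ∀ t, Measurable (X t)) :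
    charFn P X = fun t => charFun (P.map (X t)) := by
  funext t u
  rw [charFun_apply, integral_map (hX t).aemeasurable (by fun_prop)]
  refine integral_congr_ae (Eventually.of_forall fun ω => ?_)
  dsimp only
  rw [real_inner_comm, mul_comm]

lemma charFn_zero_right [IsProbabilityMeasure P] (t : ℝ) : charFn P X t 0 = 1 := by
  simp [charFn]

end CharFn

def levyExponent {Ω : Type*} [MeasurableSpace Ω] (P : Measure Ω) {n : ℕ}
    (X : ℝ → Ω → EuclideanSpace ℝ (Fin n)) (u : EuclideanSpace ℝ (Fin n)) : ℂ :=
  -derivWithin (fun t => charFn P X t u) (Set.Ici 0) 0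

namespace IsLevyProcess

variable {Ω : Type*} [MeasurableSpace Ω] {P : Measure Ω} {n : ℕ}
  {X : ℝ → Ω → EuclideanSpace ℝ (Fin n)}

lemma charFn_zero_left (hX : IsLevyProcess P X) (u : EuclideanSpace ℝ (Fin n)) :
    charFn P X 0 u = 1 := by
  have := hX.isProb
  have hmap : P.map (X 0) = Measure.dirac 0 := by
    rw [Measure.map_congr hX.init, Measure.map_const, measure_univ, one_smul]
  simp only [charFn_eq_charFun hX.meas]
  rw [hmap, charFun_dirac]
  simp

lemma charFn_add (hX : IsLevyProcess P X) (u : EuclideanSpace ℝ (Fin n)) {s t : ℝ}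
    (hs : 0 ≤ s) (ht : 0 ≤ t) :
    charFn P X (s + t) u = charFn P X s u * charFn P X t u := by
  have := hX.isProb
  have hindep : IndepFun (X (t + s) - X t) (X t) P := by
    have h := (hX.indep s t hs ht).comp measurable_id (measurable_pi_apply ⟨t, ht, le_rfl⟩)
    exact h
  have hstat : P.map (X (t + s) - X t) = P.map (X s) := hX.stat s t hs ht
  have hsum : X (s + t) = X (t + s) - X t + X t := by rw [add_comm s, sub_add_cancel]
  simp only [charFn_eq_charFun hX.meas]
  rw [hsum, hindep.charFun_map_add_eq_mul
    ((hX.meas _).sub (hX.meas t)).aemeasurable (hX.meas t).aemeasurable,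
    hstat, Pi.mul_apply]

lemma continuous_charFn (hX : IsLevyProcess P X) (t : ℝ) : Continuous (charFn P X t) := by
  have := hX.isProb
  rw [charFn_eq_charFun hX.meas]
  exact continuous_charFun

lemma tendstoUniformlyOn_charFn (hX : IsLevyProcess P X) {s : Set (EuclideanSpace ℝ (Fin n))}
    (hs : Bornology.IsBounded s) :
    TendstoUniformlyOn (charFn P X) 1 (𝓝[≥] 0) s := by
  have := hX.isProb
  have hmap : ∀ t, IsProbabilityMeasure (P.map (X t)) := fun t =>
    Measure.isProbabilityMeasure_map (hX.meas t).aemeasurable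
  rw [charFn_eq_charFun hX.meas]
  refine tendstoUniformlyOn_charFun_one_of_tendsto_measure (fun ε hε => ?_) hs
  refine (hX.contProb 0 le_rfl ε hε).congr fun t => ?_
  rw [Measure.map_apply (hX.meas t) (measurableSet_le measurable_const measurable_norm)]
  refine measure_congr (eventuallyEq_set.2 ?_)
  filter_upwards [hX.init] with ω hω
  simp only [Set.mem_preimage, Set.mem_ofPred_eq, hω, sub_zero]

lemma continuousWithinAt_charFn (hX : IsLevyProcess P X) (u : EuclideanSpace ℝ (Fin n)) :
    ContinuousWithinAt (fun t => charFn P X t u) (Set.Ici 0) 0 := by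
  rw [ContinuousWithinAt, hX.charFn_zero_left u]
  exact (hX.tendstoUniformlyOn_charFn Bornology.isBounded_singleton).tendsto_at rfl

lemma exists_re_charFn_pos (hX : IsLevyProcess P X) (R : ℝ) :
    ∃ δ > 0, ∀ u ∈ Metric.closedBall 0 R, ∀ s ∈ Set.Icc 0 δ, 0 < (charFn P X s u).re := by
  have h := hX.tendstoUniformlyOn_charFn (Metric.isBounded_closedBall (x := 0) (r := R))
  rw [Metric.tendstoUniformlyOn_iff] at h
  obtain ⟨δ, hδ, hsub⟩ := nhdsGE_basis_Icc.eventually_iff.1 (h 1 one_pos)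
  exact ⟨δ, hδ, fun u hu s hs => re_pos_of_dist_one_lt (hsub hs u hu)⟩

lemma charFn_eq_exp (hX : IsLevyProcess P X) {δ : ℝ} (hδ : 0 < δ)
    {u : EuclideanSpace ℝ (Fin n)} (hre : ∀ s ∈ Set.Icc 0 δ, 0 < (charFn P X s u).re) {t : ℝ}
    (ht : 0 ≤ t) :
    charFn P X t u = exp (t * (log (charFn P X δ u) / δ)) :=
  eq_exp_mul_of_map_add (f := fun t => charFn P X t u) (hX.charFn_zero_left u)
    (fun _ _ hs ht => hX.charFn_add u hs ht) (hX.continuousWithinAt_charFn u) hδ hre ht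

lemma levyExponent_eq (hX : IsLevyProcess P X) {δ : ℝ} (hδ : 0 < δ)
    {u : EuclideanSpace ℝ (Fin n)} (hre : ∀ s ∈ Set.Icc 0 δ, 0 < (charFn P X s u).re) :
    levyExponent P X u = -(log (charFn P X δ u) / δ) := by
  rw [levyExponent, derivWithin_Ici_zero_of_eq_exp fun t ht => hX.charFn_eq_exp hδ hre ht]

lemma charFn_eq_exp_neg_levyExponent (hX : IsLevyProcess P X) {t : ℝ} (ht : 0 ≤ t)
    (u : EuclideanSpace ℝ (Fin n)) : charFn P X t u = exp (-t * levyExponent P X u) := by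
  obtain ⟨δ, hδ, hre⟩ := hX.exists_re_charFn_pos ‖u‖
  have hreu := hre u (mem_closedBall_zero_iff.2 le_rfl)
  rw [hX.charFn_eq_exp hδ hreu ht, hX.levyExponent_eq hδ hreu, neg_mul_neg]

lemma continuous_levyExponent (hX : IsLevyProcess P X) : Continuous (levyExponent P X) := by
  refine continuous_iff_continuousAt.2 fun u₀ => ?_
  obtain ⟨δ, hδ, hre⟩ := hX.exists_re_charFn_pos (‖u₀‖ + 1)
  have hball : Metric.closedBall 0 (‖u₀‖ + 1) ∈ 𝓝 u₀ :=
    Metric.closedBall_mem_nhds_of_mem (by simp)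
  have hslit : charFn P X δ u₀ ∈ slitPlane :=
    mem_slitPlane_iff.2 (Or.inl (hre u₀ (mem_of_mem_nhds hball) δ ⟨hδ.le, le_rfl⟩))
  have hcont : ContinuousAt (fun u => -(log (charFn P X δ u) / δ)) u₀ :=
    (((continuousAt_clog hslit).comp (hX.continuous_charFn δ).continuousAt).div_const _).neg
  exact hcont.congr
    (eventually_of_mem hball fun u hu => (hX.levyExponent_eq hδ (hre u hu)).symm)

lemma levyExponent_zero (hX : IsLevyProcess P X) : levyExponent P X 0 = 0 := by
  have := hX.isProb
  rw [levyExponent, derivWithin_Ici_zero_of_eq_exp (c := 0) fun t _ => by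
    rw [charFn_zero_right, mul_zero, exp_zero], neg_zero]

end IsLevyProcess

/-- existence of the characteristic exponent:
`E[exp(i⟨u,X_t⟩)] = exp(-t ψ(u))` with `ψ` continuous and `ψ(0) = 0`. -/
theorem exists_levy_exponent {Ω : Type*} [MeasurableSpace Ω] (P : Measure Ω) {n : ℕ}
    (X : ℝ → Ω → EuclideanSpace ℝ (Fin n)) (hX : IsLevyProcess P X) :
    ∃ ψ : EuclideanSpace ℝ (Fin n) → ℂ, Continuous ψ ∧ ψ 0 = 0 ∧
      ∀ t : ℝ, 0 ≤ t → ∀ u : EuclideanSpace ℝ (Fin n),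
        charFn P X t u = Complex.exp (-(t : ℂ) * ψ u) :=
  ⟨levyExponent P X, hX.continuous_levyExponent, hX.levyExponent_zero,
    fun _ ht u => hX.charFn_eq_exp_neg_levyExponent ht u⟩
end
end

section
/- Let M be a complex-valued process such that for every u in a countable dense set, t ↦ exp(i⟨u, X_t(ω)⟩)/φ_t(u) has left and right limits along a countable set S ⊂ ℝ⁺ for ω outside a null set. Then outside a null set, for every t, the map s ↦ X_s(ω) has at most one cluster point as s ↓ t along S and at most one as s ↑ t along S; i.e. X is làglàd along S almost surely. -/
open MeasureTheory ProbabilityTheory Complex Filter Topology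
open scoped RealInnerProductSpace

noncomputable section

theorem MapClusterPt.eq_of_tendsto {X α : Type*} [TopologicalSpace X] [T2Space X]
    {F : Filter α} {u : α → X} {x y : X} (hx : MapClusterPt x F u)
    (hu : Tendsto u F (𝓝 y)) : x = y :=
  eq_of_nhds_neBot (NeBot.mono hx (inf_le_inf_left _ hu))

section InnerProductSpace

variable {E : Type*} [NormedAddCommGroup E] [InnerProductSpace ℝ E]

theorem eq_of_forall_exp_inner_eq {a b : E}
    (h : ∀ w : E, cexp (I * ⟪w, a⟫) = cexp (I * ⟪w, b⟫)) : a = b := by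
  by_contra hab
  have hd : ‖a - b‖ ≠ 0 := norm_ne_zero_iff.2 (sub_ne_zero.2 hab)
  set w : E := (Real.pi / ‖a - b‖ ^ 2) • (a - b)
  have hw : ⟪w, a⟫ = ⟪w, b⟫ + Real.pi := by
    rw [← sub_eq_iff_eq_add', ← inner_sub_right, real_inner_smul_left,
      real_inner_self_eq_norm_sq]
    field_simp
  have hneg : cexp (I * ⟪w, a⟫) = -cexp (I * ⟪w, b⟫) := by
    rw [hw, ofReal_add, mul_add, exp_add, mul_comm I (Real.pi : ℂ), exp_pi_mul_I, mul_neg_one]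
  exact exp_ne_zero _ (CharZero.eq_neg_self_iff.1 ((h w).symm.trans hneg))

theorem eq_of_forall_mem_dense_exp_inner_eq {D : Set E} (hD : Dense D) {a b : E}
    (h : ∀ w ∈ D, cexp (I * ⟪w, a⟫) = cexp (I * ⟪w, b⟫)) : a = b :=
  eq_of_forall_exp_inner_eq <|
    congrFun (Continuous.ext_on hD (by fun_prop) (by fun_prop) h)

theorem MapClusterPt.eq_of_tendsto_exp_inner {α : Type*} {D : Set E} (hD : Dense D)
    {F : Filter α} {Y : α → E}
    (h : ∀ u ∈ D, ∃ L, Tendsto (fun s => cexp (I * ⟪u, Y s⟫)) F (𝓝 L)) {a b : E}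
    (ha : MapClusterPt a F Y) (hb : MapClusterPt b F Y) : a = b := by
  refine eq_of_forall_mem_dense_exp_inner_eq hD fun u hu => ?_
  obtain ⟨L, hL⟩ := h u hu
  have hexp : Continuous fun v : E => cexp (I * ⟪u, v⟫) := by fun_prop
  exact ((ha.tendsto_comp hexp.continuousAt).eq_of_tendsto hL).trans
    ((hb.tendsto_comp hexp.continuousAt).eq_of_tendsto hL).symm

theorem MapClusterPt.eq_of_tendsto_exp_inner_div {α : Type*} {D : Set E} (hD : Dense D)
    {F : Filter α} {Y : α → E} {φ : α → E → ℂ} (hφ0 : ∀ s u, φ s u ≠ 0)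
    (hφ : ∀ u ∈ D, ∃ c, Tendsto (φ · u) F (𝓝 c))
    (h : ∀ u ∈ D, ∃ L, Tendsto (fun s => cexp (I * ⟪u, Y s⟫) / φ s u) F (𝓝 L)) {a b : E}
    (ha : MapClusterPt a F Y) (hb : MapClusterPt b F Y) : a = b := by
  refine ha.eq_of_tendsto_exp_inner hD (fun u hu => ?_) hb
  obtain ⟨c, hc⟩ := hφ u hu
  obtain ⟨L, hL⟩ := h u hu
  exact ⟨L * c, (hL.mul hc).congr fun s => div_mul_cancel₀ _ (hφ0 s u)⟩

end InnerProductSpace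

def rationalPoints (ι : Type*) : Set (EuclideanSpace ℝ ι) := {u | ∀ i, ∃ q : ℚ, u i = q}

theorem rationalPoints_eq_range (ι : Type*) :
    rationalPoints ι = Set.range fun q : ι → ℚ => WithLp.toLp 2 fun i => (q i : ℝ) := by
  ext u
  constructor
  · intro hu
    choose q hq using hu
    exact ⟨q, PiLp.ext fun i => (hq i).symm⟩
  · rintro ⟨q, rfl⟩ i
    exact ⟨q i, rfl⟩

theorem countable_rationalPoints (ι : Type*) [Finite ι] : (rationalPoints ι).Countable := by
  rw [rationalPoints_eq_range]
  exact Set.countable_range _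

theorem dense_rationalPoints (ι : Type*) : Dense (rationalPoints ι) := by
  rw [rationalPoints_eq_range]
  exact (WithLp.toLp_surjective 2).denseRange.comp
    (DenseRange.piMap fun _ => Rat.denseRange_cast) (PiLp.continuous_toLp 2 _)

theorem laglad_along_countable_set_general {Ω : Type*} [MeasurableSpace Ω] (P : Measure Ω) {n : ℕ}
    (X : ℝ → Ω → EuclideanSpace ℝ (Fin n)) (φ : ℝ → EuclideanSpace ℝ (Fin n) → ℂ)
    (hφ0 : ∀ t u, φ t u ≠ 0)
    (hφc : Continuous fun p : ℝ × EuclideanSpace ℝ (Fin n) => φ p.1 p.2)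
    (S : Set ℝ)
    (hM : ∀ u : EuclideanSpace ℝ (Fin n), (∀ i, ∃ q : ℚ, u i = (q : ℝ)) →
      ∃ N : Set Ω, P N = 0 ∧ ∀ ω ∉ N, ∀ t : ℝ, 0 ≤ t →
        (∃ L : ℂ, Tendsto (fun s => Complex.exp (Complex.I * (⟪u, X s ω⟫ : ℝ)) / φ s u)
            (𝓝[S ∩ Set.Ioi t] t) (𝓝 L)) ∧
        (∃ L : ℂ, Tendsto (fun s => Complex.exp (Complex.I * (⟪u, X s ω⟫ : ℝ)) / φ s u)
            (𝓝[S ∩ Set.Iio t] t) (𝓝 L))) :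
    ∃ N : Set Ω, P N = 0 ∧ ∀ ω ∉ N, ∀ t : ℝ, 0 ≤ t →
      (∀ a b : EuclideanSpace ℝ (Fin n),
        MapClusterPt a (𝓝[S ∩ Set.Ioi t] t) (fun s => X s ω) →
        MapClusterPt b (𝓝[S ∩ Set.Ioi t] t) (fun s => X s ω) → a = b) ∧
      (∀ a b : EuclideanSpace ℝ (Fin n),
        MapClusterPt a (𝓝[S ∩ Set.Iio t] t) (fun s => X s ω) →
        MapClusterPt b (𝓝[S ∩ Set.Iio t] t) (fun s => X s ω) → a = b) := by
  have := (countable_rationalPoints (Fin n)).to_subtype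
  choose N hN0 hN using fun u : rationalPoints (Fin n) => hM u u.2
  refine ⟨⋃ u, N u, measure_iUnion_null hN0, fun ω hω t ht => ?_⟩
  have hlim (u : rationalPoints (Fin n)) := hN u ω (hω ∘ Set.mem_iUnion_of_mem u) t ht
  have hφt (s : Set ℝ) : ∀ u ∈ rationalPoints (Fin n), ∃ c, Tendsto (φ · u) (𝓝[s] t) (𝓝 c) :=
    fun u _ => ⟨_, ((hφc.comp (Continuous.prodMk_left u)).tendsto t).mono_left nhdsWithin_le_nhds⟩
  exact ⟨fun a b => MapClusterPt.eq_of_tendsto_exp_inner_div (dense_rationalPoints _) hφ0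
      (hφt _) fun u hu => (hlim ⟨u, hu⟩).1,
    fun a b => MapClusterPt.eq_of_tendsto_exp_inner_div (dense_rationalPoints _) hφ0
      (hφt _) fun u hu => (hlim ⟨u, hu⟩).2⟩

/-- if for every rational-coordinate `u` the exponential martingale
`exp(i⟨u,X_s⟩)/φ_s(u)` has one-sided limits along a countable set `S` off a null set,
then off a null set the path `s ↦ X_s(ω)` has at most one right cluster point and at
most one left cluster point along `S` at every time `t`, i.e. `X` is làglàd along `S` a.s. -/
theorem laglad_along_countable_set {Ω : Type*} [MeasurableSpace Ω] (P : Measure Ω) {n : ℕ}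
    (X : ℝ → Ω → EuclideanSpace ℝ (Fin n)) (hX : IsLevyProcess P X)
    (φ : ℝ → EuclideanSpace ℝ (Fin n) → ℂ)
    (hφ : ∀ t u, φ t u = charFn P X t u)
    (hφ0 : ∀ t u, φ t u ≠ 0)
    (hφc : Continuous fun p : ℝ × EuclideanSpace ℝ (Fin n) => φ p.1 p.2)
    (S : Set ℝ) (hS : S.Countable) (hSpos : S ⊆ Set.Ici 0)
    (hM : ∀ u : EuclideanSpace ℝ (Fin n), (∀ i, ∃ q : ℚ, u i = (q : ℝ)) →
      ∃ N : Set Ω, P N = 0 ∧ ∀ ω ∉ N, ∀ t : ℝ, 0 ≤ t →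
        (∃ L : ℂ, Tendsto (fun s => Complex.exp (Complex.I * (⟪u, X s ω⟫ : ℝ)) / φ s u)
            (𝓝[S ∩ Set.Ioi t] t) (𝓝 L)) ∧
        (∃ L : ℂ, Tendsto (fun s => Complex.exp (Complex.I * (⟪u, X s ω⟫ : ℝ)) / φ s u)
            (𝓝[S ∩ Set.Iio t] t) (𝓝 L))) :
    ∃ N : Set Ω, P N = 0 ∧ ∀ ω ∉ N, ∀ t : ℝ, 0 ≤ t →
      (∀ a b : EuclideanSpace ℝ (Fin n),
        MapClusterPt a (𝓝[S ∩ Set.Ioi t] t) (fun s => X s ω) →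
        MapClusterPt b (𝓝[S ∩ Set.Ioi t] t) (fun s => X s ω) → a = b) ∧
      (∀ a b : EuclideanSpace ℝ (Fin n),
        MapClusterPt a (𝓝[S ∩ Set.Iio t] t) (fun s => X s ω) →
        MapClusterPt b (𝓝[S ∩ Set.Iio t] t) (fun s => X s ω) → a = b) :=
  laglad_along_countable_set_general P X φ hφ0 hφc S hM
end
end
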